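/- arXiv:1904.06992 — 2 statements merged into one kernel-verified Lean document; each statement's English description precedes it below -/
import Mathlib

section
/- Let (Ω, ν) be a measure space and u, v : Ω → (0, 1] be measurable functions. If for some α > 0 both ∫ |log u| dν < ∞ and ∫ u · v^(−α) dν < ∞, then ∫ |log v| dν < ∞. -/
open MeasureTheory Set

theorem stmt_0 {Ω : Type*} [MeasurableSpace Ω] (ν : Measure Ω)
    (u v : Ω → ℝ) (hu : Measurable u) (hv : Measurable v)
    (hu1 : ∀ x, u x ∈ Set.Ioc (0:ℝ) 1) (hv1 : ∀ x, v x ∈ Set.Ioc (0:ℝ) 1)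
    (α : ℝ) (hα : 0 < α)
    (hlogu : Integrable (fun x => |Real.log (u x)|) ν)
    (huv : Integrable (fun x => u x * (v x) ^ (-α)) ν) :
    Integrable (fun x => |Real.log (v x)|) ν := by
  have hg : Integrable (fun x => (1/α) * (u x * (v x) ^ (-α) + |Real.log (u x)|)) ν :=
    (huv.add hlogu).const_mul _
  refine hg.mono ((Real.measurable_log.comp hv).abs.aestronglyMeasurable)
    (Filter.Eventually.of_forall fun x => ?_)
  have hux := hu1 x
  have hvx := hv1 x
  have hv0 : 0 < v x := hvx.1
  have hu0 : 0 < u x := hux.1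
  have hpow : 0 < (v x) ^ (-α) := Real.rpow_pos_of_pos hv0 _
  have hlogv : Real.log (v x) ≤ 0 := Real.log_nonpos hv0.le hvx.2
  have key : -α * Real.log (v x) ≤ u x * (v x) ^ (-α) + |Real.log (u x)| := by
    have h1 : Real.log (u x * (v x) ^ (-α)) ≤ u x * (v x) ^ (-α) :=
      le_trans (Real.log_le_sub_one_of_pos (mul_pos hu0 hpow)) (by linarith)
    rw [Real.log_mul hu0.ne' hpow.ne', Real.log_rpow hv0] at h1
    have h2 : -|Real.log (u x)| ≤ Real.log (u x) := neg_abs_le _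
    linarith
  have habs : |Real.log (v x)| = -Real.log (v x) := abs_of_nonpos hlogv
  rw [Real.norm_eq_abs, Real.norm_eq_abs, abs_abs, habs]
  have hpos : 0 ≤ u x * (v x) ^ (-α) + |Real.log (u x)| := by positivity
  rw [abs_of_nonneg (by positivity : (0:ℝ) ≤ (1/α) * (u x * (v x) ^ (-α) + |Real.log (u x)|))]
  have h3 := mul_le_mul_of_nonneg_left key (le_of_lt (by positivity : (0:ℝ) < 1/α))
  rw [show (1/α) * (-α * Real.log (v x)) = -Real.log (v x) by field_simp] at h3
  exact h3
end

section
/- Let φ : 𝕋 → ℂ be measurable with |φ| < 1 a.e., w measurable not a.e. zero with ∫|log|w|| dm < ∞, and suppose that for some p > 2, ∑_{n=0}^∞ (∫_𝕋 |w|² |φ|^{2n} dm)^{p/2} < ∞. Then ∫_𝕋 log(1/(1 − |φ|)) dm < ∞. -/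
/-!
Write `b n = ∫ |w|² |φ|^{2n}` and fix `α = 1/p`. Since `α < 2/p`, Hölder's inequality with
exponents `p/2` and its conjugate turns `∑ b n ^ (p/2) < ∞` into `∑ (n+1)^{α-1} b n < ∞`.
The coefficients of `(1 - t)^{-α}` in powers of `t` are of size `n^{α-1}`, so
`(1 - |φ|)^{-α} ≲ ∑ (n+1)^{α-1} |φ|^{2n}` and hence `|w|² (1 - |φ|)^{-α}` is integrable.
Finally `log x ≤ x` applied to `x = |w|² (1 - |φ|)^{-α}` gives
`α log (1 / (1 - |φ|)) ≤ |w|² (1 - |φ|)^{-α} + |log |w|²|`, and the right side is integrable.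
-/

open MeasureTheory Real

instance : Fact (0 < 2 * Real.pi) := ⟨by positivity⟩

noncomputable def circleHaar : Measure (AddCircle (2 * Real.pi)) := AddCircle.haarAddCircle

lemma summable_nat_add_one_rpow_mul_of_summable_rpow {a : ℕ → ℝ} (ha : ∀ n, 0 ≤ a n)
    {r β : ℝ} (hr : 1 < r) (hβ : β < r⁻¹ - 1) (hsum : Summable fun n => a n ^ r) :
    Summable fun n : ℕ => ((n : ℝ) + 1) ^ β * a n := by
  set q := r.conjExponent
  have hrq : r.HolderConjugate q := .conjExponent hr
  have hq : 0 < q := hrq.symm.pos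
  have hβq : β * q < -1 := by
    have : β * q < -q⁻¹ * q := by
      have hconj : r⁻¹ - 1 = -q⁻¹ := by rw [← hrq.one_sub_inv]; ring
      exact mul_lt_mul_of_pos_right (hconj ▸ hβ) hq
    rwa [neg_mul, inv_mul_cancel₀ hq.ne'] at this
  have hpow : Summable fun n : ℕ => (((n : ℝ) + 1) ^ β) ^ q := by
    refine ((summable_nat_add_iff 1).mpr (Real.summable_nat_rpow.mpr hβq)).congr fun n => ?_
    rw [← Real.rpow_mul (by positivity)]
    push_cast
    rfl
  exact Real.summable_mul_of_Lp_Lq_of_nonneg hrq.symm (fun n => by positivity) ha hpow hsum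

lemma one_sub_rpow_neg_le_tsum {α t : ℝ} (hα0 : 0 ≤ α) (hα1 : α ≤ 1) (ht0 : 0 ≤ t)
    (ht1 : t < 1) :
    (1 - t) ^ (-α) ≤ 4 * ∑' n : ℕ, ((n : ℝ) + 1) ^ (α - 1) * t ^ n := by
  have h1t : 0 < 1 - t := by linarith
  set y := (2 * (1 - t))⁻¹
  have hy : 0 < y := by positivity
  set M := ⌈y⌉₊
  have hyM : y ≤ M := Nat.le_ceil y
  have hM : 0 < (M : ℝ) := hy.trans_le hyM
  have hsum : Summable fun n : ℕ => ((n : ℝ) + 1) ^ (α - 1) * t ^ n := by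
    refine (summable_geometric_of_lt_one ht0 ht1).of_nonneg_of_le (fun n => by positivity)
      fun n => mul_le_of_le_one_left (by positivity) ?_
    exact Real.rpow_le_one_of_one_le_of_nonpos (by simp) (by linarith)
  -- Bernoulli: `t ^ n ≥ 1 - n (1 - t) ≥ 1 / 2` as long as `n < y`.
  have hterm : ∀ n ∈ Finset.range M,
      (M : ℝ) ^ (α - 1) / 2 ≤ ((n : ℝ) + 1) ^ (α - 1) * t ^ n := by
    intro n hn
    have hny : (n : ℝ) < y := Nat.lt_ceil.mp (Finset.mem_range.mp hn)
    have hhalf : (n : ℝ) * (1 - t) ≤ 1 / 2 := by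
      have : y * (1 - t) = 1 / 2 := by
        change (2 * (1 - t))⁻¹ * (1 - t) = 1 / 2
        field_simp
      nlinarith
    have htn : 1 / 2 ≤ t ^ n := by
      have := one_add_mul_le_pow (a := t - 1) (by linarith) n
      rw [add_sub_cancel] at this
      nlinarith
    have hw : (M : ℝ) ^ (α - 1) ≤ ((n : ℝ) + 1) ^ (α - 1) :=
      Real.rpow_le_rpow_of_nonpos (by positivity)
        (by exact_mod_cast Finset.mem_range.mp hn) (by linarith)
    rw [div_eq_mul_one_div]
    exact mul_le_mul hw htn (by norm_num) (by positivity)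
  calc (1 - t) ^ (-α) ≤ 2 * y ^ α := by
        have h2 : 1 ≤ 2 * ((2 : ℝ) ^ α)⁻¹ := by
          rw [← div_eq_mul_inv, one_le_div₀ (by positivity)]
          exact Real.rpow_le_self_of_one_le one_le_two hα1
        rw [Real.inv_rpow (by positivity), Real.mul_rpow zero_le_two h1t.le,
          Real.rpow_neg h1t.le, mul_inv, ← mul_assoc]
        exact le_mul_of_one_le_left (by positivity) h2
    _ ≤ 2 * (M : ℝ) ^ α := by gcongr
    _ = 4 * (M * ((M : ℝ) ^ (α - 1) / 2)) := by
        rw [Real.rpow_sub_one hM.ne']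
        field_simp
        norm_num
    _ ≤ 4 * ∑ n ∈ Finset.range M, ((n : ℝ) + 1) ^ (α - 1) * t ^ n := by
        gcongr
        simpa using Finset.card_nsmul_le_sum _ _ _ hterm
    _ ≤ 4 * ∑' n : ℕ, ((n : ℝ) + 1) ^ (α - 1) * t ^ n := by
        gcongr
        exact hsum.sum_le_tsum _ fun n _ => by positivity

lemma one_sub_rpow_neg_le_tsum_sq {α s : ℝ} (hα0 : 0 ≤ α) (hα1 : α ≤ 1) (hs0 : 0 ≤ s)
    (hs1 : s < 1) :
    (1 - s) ^ (-α) ≤ 8 * ∑' n : ℕ, ((n : ℝ) + 1) ^ (α - 1) * s ^ (2 * n) := by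
  have hs2 : 0 < 1 - s ^ 2 := by nlinarith
  calc (1 - s) ^ (-α) ≤ ((1 - s ^ 2) / 2) ^ (-α) :=
        Real.rpow_le_rpow_of_nonpos (by positivity) (by nlinarith) (by linarith)
    _ = 2 ^ α * (1 - s ^ 2) ^ (-α) := by
        rw [Real.div_rpow hs2.le zero_le_two, Real.rpow_neg zero_le_two, div_inv_eq_mul, mul_comm]
    _ ≤ 2 * (4 * ∑' n : ℕ, ((n : ℝ) + 1) ^ (α - 1) * (s ^ 2) ^ n) := by
        gcongr
        · exact Real.rpow_le_self_of_one_le one_le_two hα1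
        · exact one_sub_rpow_neg_le_tsum hα0 hα1 (sq_nonneg s) (by nlinarith)
    _ = 8 * ∑' n : ℕ, ((n : ℝ) + 1) ^ (α - 1) * s ^ (2 * n) := by
        simp_rw [← pow_mul]; ring

section Measure

variable {X : Type*} [MeasurableSpace X] {μ : Measure X}

lemma integrable_of_norm_le_tsum {E : Type*} [NormedAddCommGroup E] {F : X → E}
    {g : ℕ → X → ℝ} (hF : AEStronglyMeasurable F μ) (hg : ∀ n, Integrable (g n) μ)
    (hg0 : ∀ n x, 0 ≤ g n x) (hsum : Summable fun n => ∫ x, g n x ∂μ)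
    (hle : ∀ᵐ x ∂μ, ‖F x‖ ≤ ∑' n, g n x) :
    Integrable F μ := by
  refine ⟨hF, ?_⟩
  have hpt : ∀ᵐ x ∂μ, ‖F x‖ₑ ≤ ∑' n, ‖g n x‖ₑ := by
    filter_upwards [hle] with x hx
    by_cases hs : Summable fun n => g n x
    · rw [← ofReal_norm]
      simp_rw [Real.enorm_of_nonneg (hg0 _ x)]
      rw [← ENNReal.ofReal_tsum_of_nonneg (hg0 · x) hs]
      exact ENNReal.ofReal_le_ofReal hx
    · rw [tsum_eq_zero_of_not_summable hs, norm_le_zero_iff] at hx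
      simp [hx]
  have hint : ∀ n, ∫⁻ x, ‖g n x‖ₑ ∂μ = ENNReal.ofReal (∫ x, g n x ∂μ) := fun n => by
    rw [← ofReal_integral_norm_eq_lintegral_enorm (hg n)]
    simp_rw [Real.norm_of_nonneg (hg0 n _)]
  calc ∫⁻ x, ‖F x‖ₑ ∂μ ≤ ∫⁻ x, ∑' n, ‖g n x‖ₑ ∂μ := lintegral_mono_ae hpt
    _ = ∑' n, ENNReal.ofReal (∫ x, g n x ∂μ) := by
        rw [lintegral_tsum fun n => (hg n).aemeasurable.enorm]
        simp_rw [hint]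
    _ = ENNReal.ofReal (∑' n, ∫ x, g n x ∂μ) :=
        (ENNReal.ofReal_tsum_of_nonneg (fun n => integral_nonneg (hg0 n)) hsum).symm
    _ < ⊤ := ENNReal.ofReal_lt_top

lemma mul_log_inv_le_mul_rpow_neg_add_abs_log {α u v : ℝ} (hu : 0 < u) (hv : 0 < v) :
    α * log (1 / v) ≤ u * v ^ (-α) + |log u| := by
  have hx : 0 < u * v ^ (-α) := by positivity
  have h := Real.log_le_sub_one_of_pos hx
  rw [Real.log_mul hu.ne' (Real.rpow_pos_of_pos hv _).ne', Real.log_rpow hv] at h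
  rw [one_div, Real.log_inv]
  have := neg_abs_le (log u)
  nlinarith

lemma integrable_log_inv_of_integrable_mul_rpow_neg {u v : X → ℝ} {α : ℝ} (hα : 0 < α)
    (hm : AEStronglyMeasurable (fun x => log (1 / v x)) μ)
    (hu : ∀ᵐ x ∂μ, 0 < u x) (hv : ∀ᵐ x ∂μ, 0 < v x ∧ v x ≤ 1)
    (hlog : Integrable (fun x => |log (u x)|) μ)
    (huv : Integrable (fun x => u x * v x ^ (-α)) μ) :
    Integrable (fun x => log (1 / v x)) μ := by
  refine ((huv.add hlog).const_mul α⁻¹).mono' hm ?_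
  filter_upwards [hu, hv] with x hux ⟨hv0, hv1⟩
  have hlog0 : 0 ≤ log (1 / v x) := Real.log_nonneg (by rw [le_div_iff₀ hv0]; linarith)
  rw [Real.norm_of_nonneg hlog0, le_inv_mul_iff₀ hα]
  exact mul_log_inv_le_mul_rpow_neg_add_abs_log hux hv0

end Measure

theorem stmt_8 (φ w : AddCircle (2 * Real.pi) → ℂ)
    (hφm : Measurable φ) (hwm : Measurable w)
    (hφ : ∀ᵐ x ∂circleHaar, ‖φ x‖ < 1)
    (hw0 : ∀ᵐ x ∂circleHaar, w x ≠ 0)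
    (hw2 : Integrable (fun x => ‖w x‖ ^ 2) circleHaar)
    (hlogw : Integrable (fun x => |Real.log ‖w x‖|) circleHaar)
    (p : ℝ) (hp : 2 < p)
    (hsum : Summable (fun n : ℕ =>
      (∫ x, ‖w x‖ ^ 2 * ‖φ x‖ ^ (2 * n) ∂circleHaar) ^ (p / 2))) :
    Integrable (fun x => Real.log (1 / (1 - ‖φ x‖))) circleHaar := by
  set α := 1 / p
  have hα0 : 0 < α := by positivity
  have hα1 : α < 1 := by rw [div_lt_one (by linarith)]; linarith
  have hterm : ∀ n : ℕ, Integrable (fun x => ‖w x‖ ^ 2 * ‖φ x‖ ^ (2 * n)) circleHaar := fun n =>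
    hw2.mono' (by fun_prop) <| by
      filter_upwards [hφ] with x hx
      rw [Real.norm_of_nonneg (by positivity)]
      exact mul_le_of_le_one_right (by positivity) (pow_le_one₀ (norm_nonneg _) hx.le)
  have hweighted : Summable fun n : ℕ =>
      ((n : ℝ) + 1) ^ (α - 1) * ∫ x, ‖w x‖ ^ 2 * ‖φ x‖ ^ (2 * n) ∂circleHaar :=
    summable_nat_add_one_rpow_mul_of_summable_rpow
      (fun n => integral_nonneg fun x => by positivity) (by linarith)
      (by
        rw [inv_div, sub_lt_sub_iff_right]
        exact div_lt_div_of_pos_right one_lt_two (by linarith))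
      hsum
  have hweight : Integrable (fun x => ‖w x‖ ^ 2 * (1 - ‖φ x‖) ^ (-α)) circleHaar := by
    refine integrable_of_norm_le_tsum (g := fun n x => 8 * ((n : ℝ) + 1) ^ (α - 1) *
        (‖w x‖ ^ 2 * ‖φ x‖ ^ (2 * n))) (by fun_prop) (fun n => (hterm n).const_mul _)
      (fun n x => by positivity) ?_ ?_
    · simp_rw [integral_const_mul, mul_assoc]
      exact hweighted.mul_left 8
    · filter_upwards [hφ] with x hx
      have hbound := one_sub_rpow_neg_le_tsum_sq hα0.le hα1.le (norm_nonneg (φ x)) hx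
      rw [Real.norm_of_nonneg (mul_nonneg (by positivity) (Real.rpow_nonneg (by linarith) _))]
      calc ‖w x‖ ^ 2 * (1 - ‖φ x‖) ^ (-α)
          ≤ ‖w x‖ ^ 2 * (8 * ∑' n : ℕ, ((n : ℝ) + 1) ^ (α - 1) * ‖φ x‖ ^ (2 * n)) := by gcongr
        _ = _ := by
          rw [← tsum_mul_left, ← tsum_mul_left]
          exact tsum_congr fun n => by ring
  refine integrable_log_inv_of_integrable_mul_rpow_neg hα0
    (Real.measurable_log.comp (by fun_prop)).aestronglyMeasurable ?_ ?_ ?_ hweight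
  · filter_upwards [hw0] with x hx using by positivity
  · filter_upwards [hφ] with x hx using ⟨by linarith, by linarith [norm_nonneg (φ x)]⟩
  · refine (hlogw.const_mul 2).congr (Filter.Eventually.of_forall fun x => ?_)
    simp [Real.log_pow, abs_mul]
end
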